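/- For even k ≥ 4 and odd t ≥ 3, the tensor product C_t × C_k of a t-cycle and a k-cycle decomposes into two Hamilton cycles: the graph G formed by the 1-factors F_1(A_{2i},A_{2i+1}) for 0 ≤ i ≤ (t−1)/2 together with F_{k−1}(A_{2i+1},A_{2i+2}) for 0 ≤ i ≤ (t−3)/2 is a single cycle of length kt, and similarly for the complementary choice (distances k−1 and 1 swapped), and these two Hamilton cycles partition the edge set of C_t × C_k. -/

import Mathlib

/-!
Both factors are graphs of the permutation `(i, x) ↦ (i + 1, x ± s)` of `Z_t × Z_k`, with `+`
on even columns `i`, and `s = 1` for `G`, `s = -1` for `H`. One lap around the odd number of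
columns meets one more even column than odd ones, so it shifts `x` by exactly `s`; hence the
permutation is a single `kt`-cycle, and for `t ≥ 3` its graph is a Hamilton cycle. From each
vertex the two permutations step to the two neighbours `x + 1`, `x - 1` in the next column,
which are distinct for `k ≥ 3`: this gives the edge partition.
-/

open SimpleGraph

/-- Tensor (categorical) product of simple graphs. -/
def tensorProd {α β : Type*} (G : SimpleGraph α) (H : SimpleGraph β) :
    SimpleGraph (α × β) where
  Adj x y := G.Adj x.1 y.1 ∧ H.Adj x.2 y.2
  symm := ⟨fun x y h => ⟨h.1.symm, h.2.symm⟩⟩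
  loopless := ⟨fun x h => G.loopless.irrefl x.1 h.1⟩

/-- The cycle graph `C_k` on vertex set `Fin k` (for `k ≥ 3`). -/
def cycleG (k : ℕ) : SimpleGraph (Fin k) :=
  SimpleGraph.fromRel (fun x y => (x.val + 1) % k = y.val)

/-- `H` restricted to `S` is a disjoint union of `k`-cycles covering exactly the
vertices of `S`: the support of `H` is `S`, every vertex of `S` has exactly two
neighbours, and every connected component meeting `S` has exactly `k` vertices
(a finite connected 2-regular graph on `k` vertices is a `k`-cycle). -/
def IsUnionOfCycles {V : Type*} (H : SimpleGraph V) (S : Set V) (k : ℕ) : Prop :=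
  (∀ v, v ∈ S ↔ (H.neighborSet v).Nonempty) ∧
  (∀ v ∈ S, (H.neighborSet v).ncard = 2) ∧
  (∀ v ∈ S, {w | H.Reachable v w}.ncard = k)

/-- The subgraph `G` of `C_t × C_k` using the matchings of distance `1` from
`A_{2i}` to `A_{2i+1}` and distance `k-1` from `A_{2i+1}` to `A_{2i+2}`. -/
def Gfac (t k : ℕ) : SimpleGraph (Fin t × Fin k) :=
  SimpleGraph.fromRel (fun x y =>
    (x.1.val + 1) % t = y.1.val ∧
    ((Even x.1.val ∧ (x.2.val + 1) % k = y.2.val) ∨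
     (¬ Even x.1.val ∧ (x.2.val + (k - 1)) % k = y.2.val)))

/-- The complementary subgraph `H` of `C_t × C_k` (distances `k-1` and `1`
swapped). -/
def Hfac (t k : ℕ) : SimpleGraph (Fin t × Fin k) :=
  SimpleGraph.fromRel (fun x y =>
    (x.1.val + 1) % t = y.1.val ∧
    ((Even x.1.val ∧ (x.2.val + (k - 1)) % k = y.2.val) ∨
     (¬ Even x.1.val ∧ (x.2.val + 1) % k = y.2.val)))

def permGraph {V : Type*} (f : Equiv.Perm V) : SimpleGraph V :=
  SimpleGraph.fromRel fun x y => y = f x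

section permGraph

variable {V : Type*} (f : Equiv.Perm V)

lemma permGraph_adj (hf : ∀ x, f x ≠ x) {x y : V} :
    (permGraph f).Adj x y ↔ y = f x ∨ x = f y := by
  rw [permGraph, fromRel_adj, and_iff_right_iff_imp]
  rintro (rfl | rfl)
  exacts [(hf x).symm, hf y]

lemma neighborSet_permGraph (hf : ∀ x, f x ≠ x) (x : V) :
    (permGraph f).neighborSet x = {f x, f.symm x} := by
  ext y
  simp [permGraph_adj f hf, Equiv.eq_symm_apply, eq_comm]

lemma ncard_neighborSet_permGraph (hf : ∀ x, f (f x) ≠ x) (x : V) :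
    ((permGraph f).neighborSet x).ncard = 2 := by
  have hf' (x : V) : f x ≠ x := fun h => hf x (by rw [h, h])
  rw [neighborSet_permGraph f hf', Set.ncard_pair]
  intro h
  apply hf x
  rw [h, Equiv.apply_symm_apply]

lemma permGraph_reachable_apply (x : V) : (permGraph f).Reachable x (f x) := by
  by_cases h : f x = x
  · rw [h]
  · exact Adj.reachable (by simp [permGraph, fromRel_adj, Ne.symm h])

lemma permGraph_reachable_zpow_apply (x : V) (i : ℤ) :
    (permGraph f).Reachable x ((f ^ i) x) := by
  induction i using Int.induction_on with
  | zero => rfl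
  | succ i ih =>
    rw [add_comm, zpow_one_add, Equiv.Perm.mul_apply]
    exact ih.trans (permGraph_reachable_apply f _)
  | pred i ih =>
    refine ih.trans (Reachable.symm ?_)
    convert permGraph_reachable_apply f ((f ^ (-(i : ℤ) - 1)) x) using 1
    rw [← Equiv.Perm.mul_apply, ← zpow_one_add, add_sub_cancel]

lemma permGraph_reachable_of_sameCycle {x y : V} (h : f.SameCycle x y) :
    (permGraph f).Reachable x y := by
  obtain ⟨i, rfl⟩ := h
  exact permGraph_reachable_zpow_apply f x i

theorem isUnionOfCycles_permGraph (hf : ∀ x, f (f x) ≠ x) (hcyc : ∀ x y, f.SameCycle x y) :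
    IsUnionOfCycles (permGraph f) Set.univ (Nat.card V) := by
  refine ⟨fun x => ?_, fun x _ => ncard_neighborSet_permGraph f hf x, fun x _ => ?_⟩
  · simp only [Set.mem_univ, true_iff]
    exact Set.nonempty_of_ncard_ne_zero (by rw [ncard_neighborSet_permGraph f hf]; omega)
  · have : {y | (permGraph f).Reachable x y} = Set.univ :=
      Set.eq_univ_of_forall fun y => permGraph_reachable_of_sameCycle f (hcyc x y)
    rw [this, Set.ncard_univ]

lemma permGraph_inf_permGraph_eq_bot {g : Equiv.Perm V} (hfg : ∀ x, f x ≠ g x)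
    (hgf : ∀ x, g (f x) ≠ x) : permGraph f ⊓ permGraph g = ⊥ := by
  ext x y
  simp only [permGraph, inf_adj, fromRel_adj, bot_adj, iff_false]
  rintro ⟨⟨-, rfl | rfl⟩, -, h | h⟩
  exacts [hfg x h, hgf x h.symm, hgf y h.symm, hfg y h]

end permGraph

open scoped Fin.CommRing

namespace Fin

variable {n : ℕ} [NeZero n]

lemma add_one_ne (hn : 2 ≤ n) (a : Fin n) : a + 1 ≠ a := by
  rw [Ne, add_eq_left, Fin.ext_iff, Fin.val_one', Fin.val_zero, Nat.mod_eq_of_lt (by omega)]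
  omega

lemma add_one_add_one_ne (hn : 3 ≤ n) (a : Fin n) : a + 1 + 1 ≠ a := by
  rw [add_assoc, Ne, add_eq_left, Fin.ext_iff, Fin.val_add, Fin.val_one', Fin.val_zero,
    Nat.mod_eq_of_lt (by omega : 1 < n), Nat.mod_eq_of_lt (by omega : 1 + 1 < n)]
  omega

lemma val_add_one_mod_eq_iff (a b : Fin n) : (a.val + 1) % n = b.val ↔ b = a + 1 := by
  rw [eq_comm, Fin.ext_iff, Fin.val_add, Fin.val_one', Nat.add_mod_mod]

lemma val_add_pred_mod_eq_iff (hn : 2 ≤ n) (a b : Fin n) :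
    (a.val + (n - 1)) % n = b.val ↔ b = a - 1 := by
  rw [eq_comm, Fin.ext_iff, Fin.sub_def, Fin.val_one', Nat.mod_eq_of_lt (by omega : 1 < n),
    add_comm]

end Fin

lemma cycleG_adj {n : ℕ} [NeZero n] (hn : 2 ≤ n) (a b : Fin n) :
    (cycleG n).Adj a b ↔ b = a + 1 ∨ a = b + 1 := by
  rw [cycleG, fromRel_adj, Fin.val_add_one_mod_eq_iff, Fin.val_add_one_mod_eq_iff,
    and_iff_right_iff_imp]
  rintro (rfl | rfl)
  exacts [(Fin.add_one_ne hn a).symm, Fin.add_one_ne hn b]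

section zigzag

variable (t : ℕ) {k : ℕ} [NeZero t] [NeZero k]

def zigzag (s : Fin k) : Equiv.Perm (Fin t × Fin k) where
  toFun p := (p.1 + 1, if Even p.1.val then p.2 + s else p.2 - s)
  invFun p := (p.1 - 1, if Even (p.1 - 1).val then p.2 - s else p.2 + s)
  left_inv p := by by_cases h : Even p.1.val <;> simp [h]
  right_inv p := by by_cases h : Even (p.1 - 1).val <;> simp [h]

lemma zigzag_apply_ne (ht : 2 ≤ t) (s : Fin k) (p : Fin t × Fin k) : zigzag t s p ≠ p :=
  fun h => Fin.add_one_ne ht p.1 (congrArg Prod.fst h)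

lemma zigzag_zigzag_ne (ht : 3 ≤ t) (s s' : Fin k) (p : Fin t × Fin k) :
    zigzag t s (zigzag t s' p) ≠ p :=
  fun h => Fin.add_one_add_one_ne ht p.1 (congrArg Prod.fst h)

lemma zigzag_one_ne_zigzag_neg_one (hk : 3 ≤ k) (p : Fin t × Fin k) :
    zigzag t 1 p ≠ zigzag t (-1) p := by
  intro h
  have h2 := congrArg Prod.snd h
  simp only [zigzag, Equiv.coe_fn_mk, sub_neg_eq_add, ← sub_eq_add_neg] at h2
  have hne := Fin.add_one_add_one_ne hk p.2
  split_ifs at h2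
  · exact hne (by rw [h2, sub_add_cancel])
  · exact hne (by rw [← h2, sub_add_cancel])

lemma zigzag_pow_apply_zero (s : Fin k) {a : ℕ} (ha : a ≤ t) (z : Fin k) :
    (zigzag t s ^ a) (0, z) = ((a : Fin t), if Even a then z else z + s) := by
  induction a with
  | zero => simp
  | succ a ih =>
    rw [pow_succ', Equiv.Perm.mul_apply, ih (by omega)]
    have ha' : ((a : Fin t)).val = a := by rw [Fin.val_natCast, Nat.mod_eq_of_lt (by omega)]
    simp only [zigzag, Equiv.coe_fn_mk, ha', Nat.cast_succ, Nat.even_add_one, Prod.mk.injEq,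
      true_and]
    by_cases he : Even a <;> simp [he]

lemma zigzag_pow_mul_apply_zero (ht : Odd t) (s : Fin k) (m : ℕ) (z : Fin k) :
    (zigzag t s ^ (t * m)) (0, z) = (0, z + m * s) := by
  induction m with
  | zero => simp
  | succ m ih =>
    rw [mul_add_one, add_comm, pow_add, Equiv.Perm.mul_apply, ih,
      zigzag_pow_apply_zero t s le_rfl, if_neg (Nat.not_even_iff_odd.2 ht), Fin.natCast_self,
      Nat.cast_succ]
    ring_nf

lemma sameCycle_zigzag (ht : Odd t) {s : Fin k} (hs : IsUnit s) (p q : Fin t × Fin k) :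
    (zigzag t s).SameCycle p q := by
  suffices h : ∀ p, (zigzag t s).SameCycle (0, 0) p from (h p).symm.trans (h q)
  rintro ⟨i, z⟩
  obtain ⟨u, rfl⟩ := hs
  -- the shift of the second coordinate on the way from column `0` to column `i`
  set c : Fin k := if Even i.val then 0 else u
  have h0 : (zigzag t u).SameCycle (0, 0) (0, z - c) := by
    refine ⟨(t * ((z - c) * ↑u⁻¹).val : ℕ), ?_⟩
    rw [zpow_natCast, zigzag_pow_mul_apply_zero t ht, Fin.cast_val_eq_self, zero_add,
      mul_assoc, Units.inv_mul, mul_one]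
  have hi : (zigzag t u ^ i.val) (0, z - c) = (i, z) := by
    rw [zigzag_pow_apply_zero t _ i.isLt.le, Fin.cast_val_eq_self]
    by_cases he : Even i.val <;> simp [c, he]
  rw [← hi]
  exact Equiv.Perm.sameCycle_pow_right.2 h0

end zigzag

section factors

variable {t k : ℕ} [NeZero t] [NeZero k]

lemma Gfac_eq_permGraph (hk : 2 ≤ k) : Gfac t k = permGraph (zigzag t 1) := by
  rw [Gfac, permGraph]
  congr
  ext x y
  by_cases he : Even x.1.val <;>
    simp [zigzag, he, Prod.ext_iff, Fin.val_add_one_mod_eq_iff, Fin.val_add_pred_mod_eq_iff hk]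

lemma Hfac_eq_permGraph (hk : 2 ≤ k) : Hfac t k = permGraph (zigzag t (-1)) := by
  rw [Hfac, permGraph]
  congr
  ext x y
  by_cases he : Even x.1.val <;>
    simp [zigzag, he, Prod.ext_iff, Fin.val_add_one_mod_eq_iff, Fin.val_add_pred_mod_eq_iff hk,
      ← sub_eq_add_neg]

lemma eq_zigzag_one_or_neg_one_iff (x y : Fin t × Fin k) :
    y = zigzag t 1 x ∨ y = zigzag t (-1) x ↔
      y.1 = x.1 + 1 ∧ (y.2 = x.2 + 1 ∨ x.2 = y.2 + 1) := by
  by_cases he : Even x.1.val <;>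
    simp only [zigzag, Equiv.coe_fn_mk, he, if_true, if_false, Prod.ext_iff, ← sub_eq_add_neg,
      sub_neg_eq_add, ← and_or_left, eq_sub_iff_add_eq, @eq_comm _ x.2, or_comm]

lemma permGraph_zigzag_one_sup_neg_one (ht : 3 ≤ t) (hk : 2 ≤ k) :
    permGraph (zigzag t 1) ⊔ permGraph (zigzag t (-1)) = tensorProd (cycleG t) (cycleG k) := by
  ext x y
  rw [sup_adj, permGraph_adj _ (zigzag_apply_ne t (by omega) _),
    permGraph_adj _ (zigzag_apply_ne t (by omega) _)]
  change _ ↔ (cycleG t).Adj x.1 y.1 ∧ (cycleG k).Adj x.2 y.2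
  rw [cycleG_adj (by omega), cycleG_adj hk]
  have hxy := eq_zigzag_one_or_neg_one_iff x y
  have hyx := eq_zigzag_one_or_neg_one_iff y x
  tauto

end factors

theorem stmt12_general (t k : ℕ) (hk4 : 4 ≤ k) (ht : Odd t) (ht3 : 3 ≤ t) :
    IsUnionOfCycles (Gfac t k) Set.univ (k * t) ∧
    IsUnionOfCycles (Hfac t k) Set.univ (k * t) ∧
    Gfac t k ⊓ Hfac t k = ⊥ ∧
    Gfac t k ⊔ Hfac t k = tensorProd (cycleG t) (cycleG k) := by
  have : NeZero t := ⟨by omega⟩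
  have : NeZero k := ⟨by omega⟩
  have hcard : Nat.card (Fin t × Fin k) = k * t := by simp [mul_comm]
  rw [Gfac_eq_permGraph (by omega), Hfac_eq_permGraph (by omega), ← hcard]
  exact ⟨isUnionOfCycles_permGraph _ (zigzag_zigzag_ne t ht3 _ _)
      (sameCycle_zigzag t ht isUnit_one),
    isUnionOfCycles_permGraph _ (zigzag_zigzag_ne t ht3 _ _)
      (sameCycle_zigzag t ht isUnit_one.neg),
    permGraph_inf_permGraph_eq_bot _ (zigzag_one_ne_zigzag_neg_one t (by omega))
      (zigzag_zigzag_ne t ht3 _ _),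
    permGraph_zigzag_one_sup_neg_one ht3 (by omega)⟩

/-- For even `k ≥ 4` and odd `t ≥ 3`, both `G` and `H` are Hamilton cycles
(single cycles of length `kt`) of `C_t × C_k`, they are edge-disjoint, and
together they partition the edge set of `C_t × C_k`. -/
theorem stmt12 (t k : ℕ) (hk : Even k) (hk4 : 4 ≤ k) (ht : Odd t) (ht3 : 3 ≤ t) :
    IsUnionOfCycles (Gfac t k) Set.univ (k * t) ∧
    IsUnionOfCycles (Hfac t k) Set.univ (k * t) ∧
    Gfac t k ⊓ Hfac t k = ⊥ ∧
    Gfac t k ⊔ Hfac t k = tensorProd (cycleG t) (cycleG k) :=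
  stmt12_general t k hk4 ht ht3
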